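/- Let K be a torsion-free group with nontrivial center that contains a finite-index subgroup isomorphic to ℤ × ℤ. If K does not contain a subgroup isomorphic to the generalized dihedral group ⟨x, y ∣ x² = y²⟩, then K is abelian. -/

import Mathlib

/-!
Let `N` be the normal core of the finite-index copy of `ℤ × ℤ`: a normal, finite-index,
torsion-free abelian subgroup of rank at most two. Conjugation by `g ∈ K` restricts to an
automorphism `σ` of `N` with `σ ^ k = 1` (as `g ^ k ∈ N` for `k = [K : N]`) fixing
`c = g ^ k ≠ 1`. If `σ x ≠ x`, the norm map `∏ i < k, σ ^ i` kills `u = σ x * x⁻¹ ≠ 1` but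
not `c`, so a relation among `σ u, u, c` takes the form `σ u ^ α = u ^ δ` with `α ≠ 0`;
iterating it `k` times gives `δ = ±α`, i.e. `σ u = u` or `σ u = u⁻¹`. The first forces
`σ ^ i x = u ^ i * x`, contradicting `σ ^ k = 1`; in the second, `g` and `u` generate a copy
of `⟨x, y ∣ x² = y²⟩`. Hence `N` is central, so the center has finite index, and the transfer
`K → Z(K)`, `g ↦ g ^ [K : Z(K)]`, shows that every commutator has finite order.
-/

/-- The generalized dihedral group `⟨x, y ∣ x² = y²⟩`, presented with the single
relator `x²y⁻²`. -/
abbrev GenDihedral : Type :=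
  PresentedGroup
    ({FreeGroup.of true ^ 2 * (FreeGroup.of false ^ 2)⁻¹} : Set (FreeGroup Bool))

open Subgroup Function
open scoped commutatorElement IsMulCommutative

section ConjInv

variable {G : Type*} [Group G]

theorem conj_zpow_eq_zpow_neg_of_conj_eq_inv {g b : G} (h : g * b * g⁻¹ = b⁻¹) (m : ℤ) :
    g * b ^ m * g⁻¹ = b ^ (-m) := by
  rw [← MulAut.conj_apply, map_zpow, MulAut.conj_apply, h, zpow_neg, inv_zpow]

theorem mem_normalizer_zpowers_of_conj_eq_inv {g b : G} (h : g * b * g⁻¹ = b⁻¹) :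
    g ∈ normalizer (zpowers b : Set G) := by
  rw [mem_normalizer_iff_map_conj_eq, MonoidHom.map_zpowers, MonoidHom.coe_coe,
    MulAut.conj_apply, h, zpowers_inv]

theorem conj_mul_inv_eq_inv_of_sq_eq_sq {g h : G} (hgh : g ^ 2 = h ^ 2) :
    g * (g * h⁻¹) * g⁻¹ = (g * h⁻¹)⁻¹ ∧ h * (g * h⁻¹) * h⁻¹ = (g * h⁻¹)⁻¹ := by
  rw [sq, sq] at hgh
  constructor
  · rw [← mul_assoc, hgh]; group
  · rw [show h * (g * h⁻¹) * h⁻¹ = h * g * (h * h)⁻¹ by group, ← hgh]; group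

end ConjInv

namespace GenDihedral

def x : GenDihedral := PresentedGroup.of true

def y : GenDihedral := PresentedGroup.of false

def b : GenDihedral := x * y⁻¹

theorem x_sq_eq_y_sq : x ^ 2 = y ^ 2 :=
  mul_inv_eq_one.mp (PresentedGroup.one_of_mem rfl)

theorem normal_zpowers_b : (zpowers b).Normal := by
  obtain ⟨hx, hy⟩ := conj_mul_inv_eq_inv_of_sq_eq_sq x_sq_eq_y_sq
  rw [← normalizer_eq_top_iff, eq_top_iff, ← PresentedGroup.closure_range_of, closure_le]
  rintro _ ⟨_ | _, rfl⟩
  · exact mem_normalizer_zpowers_of_conj_eq_inv hy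
  · exact mem_normalizer_zpowers_of_conj_eq_inv hx

theorem exists_zpow_mul_zpow_eq (p : GenDihedral) : ∃ n m : ℤ, x ^ n * b ^ m = p := by
  have hsup : zpowers x ⊔ zpowers b = ⊤ := by
    rw [eq_top_iff, ← PresentedGroup.closure_range_of, closure_le]
    rintro _ ⟨_ | _, rfl⟩
    · rw [show PresentedGroup.of false = b⁻¹ * x by simp [b, x, y]]
      exact mul_mem (inv_mem (mem_sup_right (mem_zpowers b))) (mem_sup_left (mem_zpowers x))
    · exact mem_sup_left (mem_zpowers x)
  have hp : p ∈ ((zpowers x ⊔ zpowers b : Subgroup GenDihedral) : Set GenDihedral) := by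
    rw [hsup]; trivial
  have := normal_zpowers_b
  rw [mul_normal] at hp
  obtain ⟨_, ⟨n, rfl⟩, _, ⟨m, rfl⟩, rfl⟩ := hp
  exact ⟨n, m, rfl⟩

variable {K : Type*} [Group K] {g h : K}

def lift (hgh : g ^ 2 = h ^ 2) : GenDihedral →* K :=
  PresentedGroup.toGroup (f := fun t => if t then g else h) (by
    rintro _ rfl
    simp [hgh])

theorem lift_x (hgh : g ^ 2 = h ^ 2) : lift hgh x = g := PresentedGroup.toGroup.of _

theorem lift_b (hgh : g ^ 2 = h ^ 2) : lift hgh b = g * h⁻¹ := by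
  rw [b, map_mul, map_inv, lift_x]
  exact congrArg _ (congrArg _ (PresentedGroup.toGroup.of _))

theorem lift_injective (hgh : g ^ 2 = h ^ 2) (hg : ¬IsOfFinOrder g)
    (hb : ¬IsOfFinOrder (g * h⁻¹)) : Injective (lift hgh) := by
  rw [injective_iff_map_eq_one]
  intro p hp
  obtain ⟨n, m, rfl⟩ := exists_zpow_mul_zpow_eq p
  rw [map_mul, map_zpow, map_zpow, lift_x, lift_b] at hp
  set c := g * h⁻¹
  have hgn : g ^ n = c ^ (-m) := by rw [zpow_neg]; exact eq_inv_of_mul_eq_one_left hp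
  -- `g` inverts `c` but commutes with its own power `g ^ n = c ^ (-m)`
  have hm : m = 0 := by
    have hinv := conj_zpow_eq_zpow_neg_of_conj_eq_inv (conj_mul_inv_eq_inv_of_sq_eq_sq hgh).1 (-m)
    rw [← hgn, (Commute.self_zpow g n).eq, mul_inv_cancel_right, hgn, neg_neg] at hinv
    have := injective_zpow_iff_not_isOfFinOrder.mpr hb hinv
    omega
  subst hm
  rw [zpow_zero, mul_one] at hp
  rw [injective_zpow_iff_not_isOfFinOrder.mpr hg (hp.trans (zpow_zero g).symm), zpow_zero,
    zpow_zero, mul_one]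

theorem exists_injective_hom_of_conj_eq_inv {g c : K} (hg : ¬IsOfFinOrder g)
    (hc : ¬IsOfFinOrder c) (hgc : g * c * g⁻¹ = c⁻¹) :
    ∃ φ : GenDihedral →* K, Injective φ := by
  have hsq : g ^ 2 = (c⁻¹ * g) ^ 2 := by
    rw [sq, sq, show c⁻¹ * g * (c⁻¹ * g) = c⁻¹ * (g * c⁻¹ * g⁻¹) * (g * g) by group,
      show g * c⁻¹ * g⁻¹ = c by
        rw [← inv_inj, mul_inv_rev, mul_inv_rev, inv_inv, inv_inv, ← mul_assoc, hgc]]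
    group
  refine ⟨lift hsq, lift_injective hsq hg ?_⟩
  rwa [mul_inv_rev, inv_inv, mul_inv_cancel_left]

end GenDihedral

theorem exists_zpow_relation_of_rank_le_two {G : Type*} [CommGroup G]
    (hrank : Module.rank ℤ (Additive G) ≤ 2) (x y z : G) :
    ∃ α β γ : ℤ, (α ≠ 0 ∨ β ≠ 0 ∨ γ ≠ 0) ∧ x ^ α * y ^ β * z ^ γ = 1 := by
  have hdep : ¬LinearIndependent ℤ ![Additive.ofMul x, Additive.ofMul y, Additive.ofMul z] := by
    intro hli
    have := hli.cardinal_lift_le_rank.trans (Cardinal.lift_le.mpr hrank)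
    norm_num at this
  obtain ⟨c, hc, i, hi⟩ := Fintype.not_linearIndependent_iff.mp hdep
  refine ⟨c 0, c 1, c 2, by fin_cases i <;> simp_all, ?_⟩
  simpa [Fin.sum_univ_three] using congrArg Additive.toMul hc

theorem rank_additive_le_two_of_injective {G : Type*} [CommGroup G]
    (f : G →* Multiplicative (ℤ × ℤ)) (hf : Injective f) : Module.rank ℤ (Additive G) ≤ 2 := by
  have h := (MonoidHom.toAdditiveLeft f).toIntLinearMap.lift_rank_le_of_injective hf
  rw [rank_prod', Module.rank_self] at h
  simpa [one_add_one_eq_two] using h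

namespace MulAut

section Group

variable {G : Type*} [Group G] {σ : MulAut G}

theorem pow_apply_eq_self {c : G} (hc : σ c = c) (i : ℕ) : (σ ^ i) c = c := by
  induction i with
  | zero => rfl
  | succ i ih => rw [pow_succ, mul_apply, hc, ih]

theorem pow_apply_zpow_pow_eq_zpow_pow {u : G} {α δ : ℤ} (h : σ u ^ α = u ^ δ) (i : ℕ) :
    (σ ^ i) u ^ (α ^ i) = u ^ (δ ^ i) := by
  induction i with
  | zero => simp
  | succ i ih =>
    rw [pow_succ σ, mul_apply, pow_succ' α, zpow_mul, ← map_zpow, h, map_zpow,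
      ← zpow_mul, mul_comm, zpow_mul, ih, ← zpow_mul, ← pow_succ]

theorem pow_apply_eq_pow_mul {x : G} (hσ : σ (σ x * x⁻¹) = σ x * x⁻¹) (i : ℕ) :
    (σ ^ i) x = (σ x * x⁻¹) ^ i * x := by
  induction i with
  | zero => simp
  | succ i ih =>
    rw [pow_succ', mul_apply, ih, map_mul, map_pow, hσ, pow_succ, mul_assoc,
      inv_mul_cancel_right]

theorem apply_eq_of_apply_mul_inv_eq [IsMulTorsionFree G] {k : ℕ} (hk : k ≠ 0)
    (hσk : σ ^ k = 1) {x : G} (hσ : σ (σ x * x⁻¹) = σ x * x⁻¹) : σ x = x := by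
  have h := pow_apply_eq_pow_mul hσ k
  rwa [hσk, one_apply, right_eq_mul, pow_eq_one_iff_left hk, mul_inv_eq_one] at h

end Group

variable {G : Type*} [CommGroup G] (σ : MulAut G) (k : ℕ)

/-- For `σ ^ k = 1`, the norm map of the cyclic group generated by `σ`. -/
def orbitProd : G →* G := ∏ i ∈ Finset.range k, (σ ^ i).toMonoidHom

theorem orbitProd_apply (x : G) : σ.orbitProd k x = ∏ i ∈ Finset.range k, (σ ^ i) x :=
  MonoidHom.finsetProd_apply _ _ _

variable {σ k}

theorem orbitProd_apply_apply (hσk : σ ^ k = 1) (x : G) :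
    σ.orbitProd k (σ x) = σ.orbitProd k x := by
  have h := Finset.prod_range_succ' (fun i => (σ ^ i) x) k
  rw [Finset.prod_range_succ, hσk] at h
  simp only [orbitProd_apply, ← mul_apply, ← pow_succ]
  exact mul_right_cancel (h.symm.trans (by simp))

theorem orbitProd_apply_of_apply_eq {c : G} (hc : σ c = c) : σ.orbitProd k c = c ^ k := by
  simp [orbitProd_apply, pow_apply_eq_self hc]

variable [IsMulTorsionFree G]

theorem exists_zpow_apply_eq_zpow (hrank : Module.rank ℤ (Additive G) ≤ 2) (hk : k ≠ 0)
    (hσk : σ ^ k = 1) {c : G} (hc : c ≠ 1) (hσc : σ c = c) {u : G} (hu : u ≠ 1)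
    (hνu : σ.orbitProd k u = 1) : ∃ α δ : ℤ, α ≠ 0 ∧ σ u ^ α = u ^ δ := by
  obtain ⟨α, β, γ, hne, hrel⟩ := exists_zpow_relation_of_rank_le_two hrank (σ u) u c
  have hγ : γ = 0 := by
    have h := congrArg (σ.orbitProd k) hrel
    rw [map_mul, map_mul, map_zpow, map_zpow, map_zpow, orbitProd_apply_apply hσk, hνu,
      orbitProd_apply_of_apply_eq hσc, one_zpow, one_zpow, one_mul, one_mul, map_one,
      ← zpow_natCast, ← zpow_mul, IsMulTorsionFree.zpow_eq_one_iff_right hc] at h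
    simpa [hk] using h
  subst hγ
  rw [zpow_zero, mul_one] at hrel
  have hα : α ≠ 0 := by
    rintro rfl
    rw [zpow_zero, one_mul, IsMulTorsionFree.zpow_eq_one_iff_right hu] at hrel
    simp_all
  exact ⟨α, -β, hα, by rw [zpow_neg]; exact eq_inv_of_mul_eq_one_left hrel⟩

theorem apply_eq_or_apply_eq_inv_of_zpow (hk : k ≠ 0) (hσk : σ ^ k = 1) {u : G} (hu : u ≠ 1)
    {α δ : ℤ} (hα : α ≠ 0) (h : σ u ^ α = u ^ δ) : σ u = u ∨ σ u = u⁻¹ := by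
  have hpow : α ^ k = δ ^ k := by
    have := pow_apply_zpow_pow_eq_zpow_pow h k
    rw [hσk, one_apply] at this
    exact injective_zpow_iff_not_isOfFinOrder.mpr (not_isOfFinOrder_of_isMulTorsionFree hu) this
  rcases (pow_eq_pow_iff_of_ne_zero hk).mp hpow with hαδ | ⟨hαδ, -⟩
  · left
    rw [← zpow_left_inj hα, h, hαδ]
  · right
    rw [← zpow_left_inj hα, h, hαδ, zpow_neg, inv_zpow, inv_inv]

theorem exists_apply_eq_inv_of_rank_le_two (hrank : Module.rank ℤ (Additive G) ≤ 2)
    (hk : k ≠ 0) (hσk : σ ^ k = 1) {c : G} (hc : c ≠ 1) (hσc : σ c = c) {x : G}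
    (hx : σ x ≠ x) : ∃ u ≠ 1, σ u = u⁻¹ := by
  have hu : σ x * x⁻¹ ≠ 1 := mul_inv_eq_one.not.mpr hx
  have hνu : σ.orbitProd k (σ x * x⁻¹) = 1 := by
    rw [map_mul, map_inv, orbitProd_apply_apply hσk, mul_inv_cancel]
  obtain ⟨α, δ, hα, h⟩ := exists_zpow_apply_eq_zpow hrank hk hσk hc hσc hu hνu
  rcases apply_eq_or_apply_eq_inv_of_zpow hk hσk hu hα h with hfix | hinv
  · exact absurd (apply_eq_of_apply_mul_inv_eq hk hσk hfix) hx
  · exact ⟨_, hu, hinv⟩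

end MulAut

theorem mul_comm_of_finiteIndex_center {G : Type*} [Group G]
    (htf : ∀ g : G, g ≠ 1 → ¬IsOfFinOrder g) [(center G).FiniteIndex] (x y : G) :
    x * y = y * x := by
  have h : ⁅x, y⁆ ^ (center G).index = 1 := by
    rw [← MonoidHom.transferCenterPow_apply, map_commutatorElement,
      commutatorElement_eq_one_iff_mul_comm.mpr (mul_comm _ _), OneMemClass.coe_one]
  by_contra hne
  exact htf _ (mt commutatorElement_eq_one_iff_mul_comm.mp hne)
    (isOfFinOrder_iff_pow_eq_one.mpr ⟨_, Nat.pos_of_ne_zero FiniteIndex.index_ne_zero, h⟩)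

theorem le_center_of_rank_le_two {K : Type*} [Group K] (htf : ∀ g : K, g ≠ 1 → ¬IsOfFinOrder g)
    (hnd : ∀ φ : GenDihedral →* K, ¬Injective φ) (N : Subgroup K) [N.Normal] [N.FiniteIndex]
    [IsMulCommutative N] (hrank : Module.rank ℤ (Additive N) ≤ 2) : N ≤ center K := by
  have : IsMulTorsionFree N := isMulTorsionFree_iff_not_isOfFinOrder.mpr fun a ha hfin =>
    htf a (by simpa using ha) (Submonoid.isOfFinOrder_coe.mpr hfin)
  intro z hz
  rw [mem_center_iff]
  intro g
  by_contra hne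
  have hg : g ≠ 1 := by rintro rfl; simp at hne
  set σ : MulAut N := MulAut.conjNormal g
  have hgk : g ^ N.index ∈ N := N.pow_index_mem g
  have hσk : σ ^ N.index = 1 := by
    refine MulEquiv.ext fun h => Subtype.ext ?_
    have hcomm := congrArg Subtype.val (mul_comm (⟨g ^ N.index, hgk⟩ : N) h)
    rw [← map_pow, MulAut.conjNormal_apply, MulAut.one_apply]
    simp only [coe_mul] at hcomm
    rw [hcomm, mul_inv_cancel_right]
  have hc : (⟨g ^ N.index, hgk⟩ : N) ≠ 1 := fun h =>
    htf g hg (isOfFinOrder_iff_pow_eq_one.mpr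
      ⟨_, Nat.pos_of_ne_zero FiniteIndex.index_ne_zero, congrArg Subtype.val h⟩)
  have hσc : σ ⟨g ^ N.index, hgk⟩ = ⟨g ^ N.index, hgk⟩ :=
    Subtype.ext <| by rw [MulAut.conjNormal_apply, (Commute.self_pow g _).eq, mul_inv_cancel_right]
  have hx : σ ⟨z, hz⟩ ≠ ⟨z, hz⟩ := fun h => hne <| by
    rw [← mul_inv_eq_iff_eq_mul, ← MulAut.conjNormal_apply g ⟨z, hz⟩, h]
  obtain ⟨u, hu, hσu⟩ :=
    MulAut.exists_apply_eq_inv_of_rank_le_two hrank FiniteIndex.index_ne_zero hσk hc hσc hx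
  have hgu : g * u * g⁻¹ = (u : K)⁻¹ := by
    rw [← MulAut.conjNormal_apply, hσu, InvMemClass.coe_inv]
  obtain ⟨φ, hφ⟩ :=
    GenDihedral.exists_injective_hom_of_conj_eq_inv (htf g hg) (htf u (by simpa using hu)) hgu
  exact hnd φ hφ

theorem abelian_of_virtually_Z2_general (K : Type) [Group K]
    (htf : ∀ g : K, g ≠ 1 → ¬IsOfFinOrder g)
    (hfi : ∃ A : Subgroup K, A.FiniteIndex ∧ Nonempty (A ≃* Multiplicative (ℤ × ℤ)))
    (hnd : ∀ φ : GenDihedral →* K, ¬ Function.Injective φ) :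
    ∀ x y : K, x * y = y * x := by
  obtain ⟨A, hA, ⟨e⟩⟩ := hfi
  have := A.normalCore_normal
  have := A.finiteIndex_normalCore
  let f : A.normalCore →* Multiplicative (ℤ × ℤ) := e.toMonoidHom.comp (inclusion A.normalCore_le)
  have hf : Injective f := e.injective.comp (inclusion_injective _)
  have : IsMulCommutative A.normalCore := ⟨⟨fun a b => hf (by rw [map_mul, map_mul, mul_comm])⟩⟩
  have := finiteIndex_of_le (le_center_of_rank_le_two htf hnd A.normalCore
    (rank_additive_le_two_of_injective f hf))
  exact mul_comm_of_finiteIndex_center htf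

/-- a torsion-free group with nontrivial center containing
`ℤ × ℤ` as a finite-index subgroup and containing no generalized dihedral
subgroup is abelian. -/
theorem abelian_of_virtually_Z2 (K : Type) [Group K]
    (htf : ∀ g : K, g ≠ 1 → ¬IsOfFinOrder g)
    (hz : Subgroup.center K ≠ ⊥)
    (hfi : ∃ A : Subgroup K, A.FiniteIndex ∧ Nonempty (A ≃* Multiplicative (ℤ × ℤ)))
    (hnd : ∀ φ : GenDihedral →* K, ¬ Function.Injective φ) :
    ∀ x y : K, x * y = y * x :=
  abelian_of_virtually_Z2_general K htf hfi hnd
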